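/- Let L ∈ {1, 2} and η̃ > 0. Suppose (r,u) follows the weight-normalized gradient flow with learning rates (η_r, η_u) = (η̃, 1), r(0) > 0, and u(0) > 0 entrywise with ‖u(0)‖₂ = 1. If all entries of u(t) are bounded away from zero uniformly in t, then r(t) is uniformly bounded above: there exists B such that r(t) ≤ B for all t ≥ 0. -/

import Mathlib

open Filter Topology

noncomputable section

variable {M N : ℕ}

/-- Entrywise (Hadamard) natural power `x^{⊙L}`. -/
def hadPow (x : Fin N → ℝ) (L : ℕ) : Fin N → ℝ := fun n => x n ^ L

/-- Euclidean (ℓ2) norm of a vector. -/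
def eucNorm (u : Fin N → ℝ) : ℝ := Real.sqrt (∑ n, u n ^ 2)

/-- The loss `𝓛(x) = (1/(2L)) ‖A x^{⊙L} − b‖₂²`. -/
def loss (A : Matrix (Fin M) (Fin N) ℝ) (b : Fin M → ℝ) (L : ℕ) (x : Fin N → ℝ) : ℝ :=
  (1 / (2 * (L : ℝ))) * ∑ m, (A.mulVec (hadPow x L) m - b m) ^ 2

/-- The gradient `∇𝓛(x) = [Aᵀ(A x^{⊙L} − b)] ⊙ x^{⊙(L−1)}`. -/
def gradLoss (A : Matrix (Fin M) (Fin N) ℝ) (b : Fin M → ℝ) (L : ℕ) (x : Fin N → ℝ) :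
    Fin N → ℝ :=
  fun n => A.transpose.mulVec (A.mulVec (hadPow x L) - b) n * x n ^ (L - 1)

/-- The weight-normalized vector `x = (r/‖u‖₂) u`. -/
def normVec (r : ℝ) (u : Fin N → ℝ) : Fin N → ℝ := (r / eucNorm u) • u

/-- `∇_r 𝓛̃(r,u) = (uᵀ/‖u‖₂) ∇𝓛((r/‖u‖₂)u)`. -/
def gradR (A : Matrix (Fin M) (Fin N) ℝ) (b : Fin M → ℝ) (L : ℕ) (r : ℝ)
    (u : Fin N → ℝ) : ℝ :=
  ∑ n, (u n / eucNorm u) * gradLoss A b L (normVec r u) n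

/-- `∇_u 𝓛̃(r,u) = (r/‖u‖₂)(I − uuᵀ/‖u‖₂²) ∇𝓛((r/‖u‖₂)u)`. -/
def gradU (A : Matrix (Fin M) (Fin N) ℝ) (b : Fin M → ℝ) (L : ℕ) (r : ℝ)
    (u : Fin N → ℝ) : Fin N → ℝ :=
  fun n => (r / eucNorm u) * (gradLoss A b L (normVec r u) n -
    (∑ k, u k * gradLoss A b L (normVec r u) k) / eucNorm u ^ 2 * u n)

/-- Weight-normalized gradient flow with (possibly time-dependent) learning rates
`(η_r, η_u)`: `∂ₜ r = −η_r ∇_r 𝓛̃(r,u)`, `∂ₜ u = −η_u ∇_u 𝓛̃(r,u)` for `t ≥ 0`. -/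
def WNFlow (A : Matrix (Fin M) (Fin N) ℝ) (b : Fin M → ℝ) (L : ℕ)
    (ηr ηu : ℝ → ℝ) (r : ℝ → ℝ) (u : ℝ → Fin N → ℝ) : Prop :=
  (∀ t, 0 ≤ t → HasDerivAt r (-(ηr t * gradR A b L (r t) (u t))) t) ∧
  (∀ t, 0 ≤ t → ∀ n, HasDerivAt (fun s => u s n) (-(ηu t * gradU A b L (r t) (u t) n)) t)

/-- Plain gradient flow `∂ₜ x = −∇𝓛(x)` for `t ≥ 0`. -/
def GradFlow (A : Matrix (Fin M) (Fin N) ℝ) (b : Fin M → ℝ) (L : ℕ)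
    (x : ℝ → Fin N → ℝ) : Prop :=
  ∀ t, 0 ≤ t → ∀ n, HasDerivAt (fun s => x s n) (-gradLoss A b L (x t) n) t

/-- The set of nonnegative solutions `S₊ = {z ≥ 0 : Az = b}`. -/
def Splus (A : Matrix (Fin M) (Fin N) ℝ) (b : Fin M → ℝ) : Set (Fin N → ℝ) :=
  {z | (∀ n, 0 ≤ z n) ∧ A.mulVec z = b}

/-- Weighted ℓ1-norm `‖z‖_{w,1} = ‖w ⊙ z‖₁`. -/
def wl1 (w z : Fin N → ℝ) : ℝ := ∑ n, |w n * z n|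

/-- The Moore–Penrose conditions characterizing the pseudoinverse `A†`. -/
def IsMoorePenrose (A : Matrix (Fin M) (Fin N) ℝ) (Adag : Matrix (Fin N) (Fin M) ℝ) :
    Prop :=
  A * Adag * A = A ∧ Adag * A * Adag = Adag ∧
    (A * Adag).transpose = A * Adag ∧ (Adag * A).transpose = Adag * A

/-- The potential `F` defining the Bregman divergence. -/
def breF (L : ℕ) (p : Fin N → ℝ) : ℝ :=
  if L = 2 then (1 / 2) * ∑ n, (p n * Real.log (p n) - p n)
  else ((L : ℝ) / (2 * (2 - (L : ℝ)))) * ∑ n, p n ^ ((2 : ℝ) / (L : ℝ))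

/-- The gradient of the potential `F`. -/
def breGradF (L : ℕ) (q : Fin N → ℝ) : Fin N → ℝ :=
  fun n => if L = 2 then (1 / 2) * Real.log (q n)
  else (1 / (2 - (L : ℝ))) * q n ^ ((2 : ℝ) / (L : ℝ) - 1)

/-- Bregman divergence `D_F(p,q) = F(p) − F(q) − ⟨∇F(q), p − q⟩`. -/
def bregman (L : ℕ) (p q : Fin N → ℝ) : ℝ :=
  breF L p - breF L q - ∑ n, breGradF L q n * (p n - q n)


/-!
The flow keeps `‖u‖₂ = 1`, so `x = r u`. Fix a least-squares solution `w`
(`Aᵀ (b - A w) = 0`) and put `y = A x^{⊙L}`; homogeneity of `x ↦ x^{⊙L}` gives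
`r ∂ᵣ𝓛̃ = ‖y - A w‖² + ⟨y - b, A w⟩`, and this makes two Lyapunov functions work.
For `L = 1`, `(r - ⟨w, u⟩) e^{r²/2η} - ∫₀^r e^{s²/2η} ds` decreases while `r ≥ 0`, and since
`|⟨w, u⟩| ≤ ‖w‖₁` it grows like `r e^{r²/2η}`: after its last crossing of a large threshold
`r` cannot climb far. For `L = 2`, `∑ wₙ log uₙ + (∑ wₙ) r²/2η - r⁴/4η` increases, and
`c ≤ uₙ ≤ 1` bounds the logarithms, so `r⁴` is at most a quadratic in `r`.
-/

open Set Matrix Real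

theorem Matrix.exists_transpose_mulVec_sub_mulVec_eq_zero {m n R : Type*} [Fintype m] [Fintype n]
    [Field R] [LinearOrder R] [IsStrictOrderedRing R] (A : Matrix m n R) (b : m → R) :
    ∃ w, Aᵀ *ᵥ (b - A *ᵥ w) = 0 := by
  have hrange : LinearMap.range (Aᵀ * A).mulVecLin = LinearMap.range Aᵀ.mulVecLin := by
    refine Submodule.eq_of_le_of_finrank_eq ?_ ?_
    · rw [mulVecLin_mul]
      exact LinearMap.range_comp_le_range _ _
    · exact (rank_transpose_mul_self A).trans (rank_transpose A).symm
  obtain ⟨w, hw⟩ : Aᵀ *ᵥ b ∈ LinearMap.range (Aᵀ * A).mulVecLin := hrange ▸ ⟨b, rfl⟩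
  refine ⟨w, ?_⟩
  rw [mulVec_sub, mulVec_mulVec, ← hw, mulVecLin_apply, sub_self]

theorem Matrix.sub_dotProduct_mulVec_eq {m n R : Type*} [Fintype m] [Fintype n] [CommRing R]
    {A : Matrix m n R} {b : m → R} {w : n → R} (hw : Aᵀ *ᵥ (b - A *ᵥ w) = 0) (z : n → R) :
    (A *ᵥ z - b) ⬝ᵥ A *ᵥ z
      = (A *ᵥ z - A *ᵥ w) ⬝ᵥ (A *ᵥ z - A *ᵥ w) + (A *ᵥ z - b) ⬝ᵥ A *ᵥ w := by
  have horth : (z - w) ⬝ᵥ Aᵀ *ᵥ (b - A *ᵥ w) = 0 := by rw [hw, dotProduct_zero]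
  rw [dotProduct_transpose_mulVec, mulVec_sub] at horth
  simp only [sub_dotProduct, dotProduct_sub] at horth ⊢
  rw [dotProduct_comm (A *ᵥ w) (A *ᵥ z)] at horth ⊢
  linear_combination -horth

section WeightNormalization

variable {A : Matrix (Fin M) (Fin N) ℝ} {b : Fin M → ℝ} {L : ℕ}

theorem eucNorm_sq (u : Fin N → ℝ) : eucNorm u ^ 2 = u ⬝ᵥ u := by
  rw [eucNorm, sq_sqrt (Finset.sum_nonneg fun n _ => sq_nonneg (u n))]
  simp only [dotProduct, sq]

theorem dotProduct_gradU_self (r : ℝ) (u : Fin N → ℝ) : u ⬝ᵥ gradU A b L r u = 0 := by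
  set g := gradLoss A b L (normVec r u)
  have hgradU : gradU A b L r u = (r / eucNorm u) • (g - ((u ⬝ᵥ g) / eucNorm u ^ 2) • u) := rfl
  rw [hgradU, dotProduct_smul, dotProduct_sub, dotProduct_smul, ← eucNorm_sq, smul_eq_mul,
    smul_eq_mul]
  rcases eq_or_ne (eucNorm u) 0 with h | h
  · simp [h]
  · field_simp
    ring

theorem WNFlow.eucNorm_eq_one {ηr ηu r : ℝ → ℝ} {u : ℝ → Fin N → ℝ}
    (hflow : WNFlow A b L ηr ηu r u) (h0 : eucNorm (u 0) = 1) {t : ℝ} (ht : 0 ≤ t) :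
    eucNorm (u t) = 1 := by
  have hderiv : ∀ s, 0 ≤ s → HasDerivAt (fun s => u s ⬝ᵥ u s) 0 s := by
    intro s hs
    have h := HasDerivAt.fun_sum (u := Finset.univ) fun n _ =>
      (hflow.2 s hs n).mul (hflow.2 s hs n)
    have horth := dotProduct_gradU_self (A := A) (b := b) (L := L) (r s) (u s)
    refine h.congr_deriv ?_
    simp only [dotProduct] at horth
    rw [← mul_zero (-(2 * ηu s)), ← horth, Finset.mul_sum]
    exact Finset.sum_congr rfl fun i _ => by ring
  have hconst := constant_of_has_deriv_right_zero
    (fun s hs => (hderiv s hs.1).continuousAt.continuousWithinAt)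
    (fun s hs => (hderiv s hs.1).hasDerivWithinAt) t ⟨ht, le_rfl⟩
  have hsq : eucNorm (u t) ^ 2 = 1 := by
    rw [eucNorm_sq, hconst, ← eucNorm_sq, h0, one_pow]
  exact (pow_eq_one_iff_of_nonneg (sqrt_nonneg _) two_ne_zero).1 hsq

theorem normVec_of_eucNorm_eq_one {u : Fin N → ℝ} (hu : eucNorm u = 1) (r : ℝ) :
    normVec r u = r • u := by
  rw [normVec, hu, div_one]

theorem gradR_of_eucNorm_eq_one {u : Fin N → ℝ} (hu : eucNorm u = 1) (r : ℝ) :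
    gradR A b L r u = u ⬝ᵥ gradLoss A b L (r • u) := by
  simp only [gradR, hu, div_one, normVec_of_eucNorm_eq_one hu, dotProduct]

theorem gradU_of_eucNorm_eq_one {u : Fin N → ℝ} (hu : eucNorm u = 1) (r : ℝ) (n : Fin N) :
    gradU A b L r u n = r * (gradLoss A b L (r • u) n - gradR A b L r u * u n) := by
  simp only [gradU, gradR_of_eucNorm_eq_one hu, hu, div_one, one_pow,
    normVec_of_eucNorm_eq_one hu, dotProduct]

theorem dotProduct_gradLoss_self (hL : L ≠ 0) (x : Fin N → ℝ) :
    x ⬝ᵥ gradLoss A b L x = (A *ᵥ hadPow x L - b) ⬝ᵥ A *ᵥ hadPow x L := by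
  rw [dotProduct_mulVec, ← mulVec_transpose]
  simp only [dotProduct, gradLoss, hadPow]
  refine Finset.sum_congr rfl fun n _ => ?_
  rw [mul_left_comm, ← pow_succ', Nat.sub_add_cancel (Nat.one_le_iff_ne_zero.2 hL), mul_comm]

theorem gradLoss_one (x : Fin N → ℝ) : gradLoss A b 1 x = Aᵀ *ᵥ (A *ᵥ hadPow x 1 - b) := by
  funext n
  simp only [gradLoss, Nat.sub_self, pow_zero, mul_one]

end WeightNormalization

theorem monotoneOn_Icc_of_hasDerivAt_nonneg {f f' : ℝ → ℝ} {a b : ℝ}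
    (hf : ∀ x ∈ Icc a b, HasDerivAt f (f' x) x) (hf' : ∀ x ∈ Icc a b, 0 ≤ f' x) :
    MonotoneOn f (Icc a b) :=
  monotoneOn_of_hasDerivWithinAt_nonneg (convex_Icc a b)
    (fun x hx => (hf x hx).continuousAt.continuousWithinAt)
    (fun x hx => (hf x (interior_subset hx)).hasDerivWithinAt)
    (fun x hx => hf' x (interior_subset hx))

theorem exists_last_crossing {f : ℝ → ℝ} {a b θ : ℝ} (hab : a ≤ b)
    (hf : ContinuousOn f (Icc a b)) (ha : f a ≤ θ) (hb : θ ≤ f b) :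
    ∃ c ∈ Icc a b, f c = θ ∧ ∀ s ∈ Icc c b, θ ≤ f s := by
  set T := Icc a b ∩ f ⁻¹' {θ}
  have hT : IsCompact T :=
    isCompact_Icc.of_isClosed_subset (hf.preimage_isClosed_of_isClosed isClosed_Icc
      isClosed_singleton) inter_subset_left
  obtain ⟨c, hc, hfc⟩ := intermediate_value_Icc hab hf ⟨ha, hb⟩
  obtain ⟨hcT, hfcT⟩ : sSup T ∈ T := hT.sSup_mem ⟨c, hc, hfc⟩
  refine ⟨sSup T, hcT, hfcT, fun s hs => not_lt.1 fun hlt => ?_⟩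
  have hsab : s ∈ Icc a b := ⟨hcT.1.trans hs.1, hs.2⟩
  obtain ⟨s', hs', hfs'⟩ := intermediate_value_Icc hs.2 (hf.mono (Icc_subset_Icc hsab.1 le_rfl))
    ⟨hlt.le, hb⟩
  have hs'c : s' ≤ sSup T := le_csSup hT.bddAbove ⟨⟨hsab.1.trans hs'.1, hs'.2⟩, hfs'⟩
  have hs's : s' = s := le_antisymm (hs'c.trans hs.1) hs'.1
  exact hlt.ne (hs's ▸ hfs')

theorem integral_exp_sq_div_le {c x : ℝ} (hc : 0 < c) (hx : 0 < x) :
    ∫ s in (0 : ℝ)..x, exp (s ^ 2 / c) ≤ c / x * exp (x ^ 2 / c) := by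
  have hmono : ∫ s in (0 : ℝ)..x, exp (s ^ 2 / c) ≤ ∫ s in (0 : ℝ)..x, exp (x / c * s) := by
    refine intervalIntegral.integral_mono_on hx.le
      ((by fun_prop : Continuous _).intervalIntegrable _ _)
      ((by fun_prop : Continuous _).intervalIntegrable _ _) fun s hs => ?_
    rw [exp_le_exp, div_mul_eq_mul_div, div_le_div_iff_of_pos_right hc, sq]
    exact mul_le_mul_of_nonneg_right hs.2 hs.1
  have hlin : ∫ s in (0 : ℝ)..x, exp (x / c * s) = c / x * (exp (x ^ 2 / c) - 1) := by
    rw [intervalIntegral.integral_comp_mul_left exp (by positivity), integral_exp, mul_zero,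
      exp_zero, inv_div, smul_eq_mul]
    congr 3
    ring
  calc _ ≤ _ := hmono
    _ = _ := hlin
    _ ≤ c / x * exp (x ^ 2 / c) := by gcongr; linarith

def lyapunovOne (η r φ : ℝ) : ℝ :=
  (r - φ) * exp (r ^ 2 / (2 * η)) - ∫ x in (0 : ℝ)..r, exp (x ^ 2 / (2 * η))

def lyapunovTwo (η W r φ : ℝ) : ℝ := φ + W / (2 * η) * r ^ 2 - r ^ 4 / (4 * η)

section Lyapunov

variable {r φ : ℝ → ℝ} {η G Q S t : ℝ}

theorem hasDerivAt_lyapunovOne (hη : η ≠ 0) (hr : HasDerivAt r (-(η * G)) t)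
    (hφ : HasDerivAt φ (r t * (G * φ t - Q)) t) (hG : r t * G = S + Q) :
    HasDerivAt (fun s => lyapunovOne η (r s) (φ s)) (-(r t * S * exp (r t ^ 2 / (2 * η)))) t := by
  have hE := ((hr.pow 2).div_const (2 * η)).exp
  have hF := (Continuous.integral_hasStrictDerivAt
    (by fun_prop : Continuous fun x => exp (x ^ 2 / (2 * η))) 0 (r t)).hasDerivAt.comp t hr
  refine (((hr.sub hφ).mul hE).sub hF).congr_deriv ?_
  simp only [Pi.pow_apply, Pi.sub_apply]
  field_simp
  linear_combination -2 * r t * hG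

theorem hasDerivAt_lyapunovTwo {W : ℝ} (hη : η ≠ 0) (hr : HasDerivAt r (-(η * G)) t)
    (hφ : HasDerivAt φ (r t * (W * G - r t * Q)) t) (hG : r t * G = S + Q) :
    HasDerivAt (fun s => lyapunovTwo η W (r s) (φ s)) (r t ^ 2 * S) t := by
  refine ((hφ.add ((hr.pow 2).const_mul _)).sub ((hr.pow 4).div_const _)).congr_deriv ?_
  field_simp
  linear_combination 8 * r t ^ 2 * hG

end Lyapunov

theorem lyapunovOne_ge {η r φ K : ℝ} (hη : 0 < η) (hr : 0 < r) (hφ : |φ| ≤ K) :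
    (r - K - 2 * η / r) * exp (r ^ 2 / (2 * η)) ≤ lyapunovOne η r φ := by
  have hF := integral_exp_sq_div_le (by positivity : 0 < 2 * η) hr
  have hφK := (abs_le.1 hφ).2
  rw [lyapunovOne]
  nlinarith [exp_pos (r ^ 2 / (2 * η))]

theorem lyapunovOne_le {η θ ψ K : ℝ} (hθ : 0 ≤ θ) (hψ : |ψ| ≤ K) :
    lyapunovOne η θ ψ ≤ (θ + K) * exp (θ ^ 2 / (2 * η)) := by
  have hF : 0 ≤ ∫ x in (0 : ℝ)..θ, exp (x ^ 2 / (2 * η)) :=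
    intervalIntegral.integral_nonneg hθ fun x _ => (exp_pos _).le
  have hψK := (abs_le.1 hψ).1
  rw [lyapunovOne]
  nlinarith [exp_pos (θ ^ 2 / (2 * η))]

theorem le_of_lyapunovOne_le {η r θ φ ψ K : ℝ} (hη : 0 < η) (hθ : K + 2 * η + 1 ≤ θ)
    (hr : θ ≤ r) (hφ : |φ| ≤ K) (hψ : |ψ| ≤ K)
    (h : lyapunovOne η r φ ≤ lyapunovOne η θ ψ) :
    r ≤ 2 * η * ((θ + K) * exp (θ ^ 2 / (2 * η))) := by
  have hK : 0 ≤ K := (abs_nonneg φ).trans hφ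
  have hr1 : 1 ≤ r := by linarith
  have hcoef : 1 ≤ r - K - 2 * η / r := by
    have : 2 * η / r ≤ 2 * η := div_le_self (by positivity) hr1
    linarith
  have hE : exp (r ^ 2 / (2 * η)) ≤ (θ + K) * exp (θ ^ 2 / (2 * η)) :=
    calc exp (r ^ 2 / (2 * η)) ≤ (r - K - 2 * η / r) * exp (r ^ 2 / (2 * η)) :=
          le_mul_of_one_le_left (exp_pos _).le hcoef
      _ ≤ lyapunovOne η r φ := lyapunovOne_ge hη (by linarith) hφ
      _ ≤ lyapunovOne η θ ψ := h
      _ ≤ (θ + K) * exp (θ ^ 2 / (2 * η)) := lyapunovOne_le (by linarith) hψ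
  have hsq : r ^ 2 ≤ 2 * η * exp (r ^ 2 / (2 * η)) := by
    have := add_one_le_exp (r ^ 2 / (2 * η))
    rw [← div_le_iff₀' (by positivity)]
    linarith
  nlinarith

theorem le_max_of_pow_four_le {x a c : ℝ} (h : x ^ 4 ≤ a + c * x ^ 2) :
    x ≤ max 1 (|a| + |c|) := by
  rcases le_or_gt x 1 with hx | hx
  · exact le_max_of_le_left hx
  · refine le_max_of_le_right ?_
    have hx2 : 1 ≤ x ^ 2 := by nlinarith
    have : x ^ 2 * x ^ 2 ≤ (|a| + |c|) * x ^ 2 := by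
      nlinarith [mul_le_mul_of_nonneg_left hx2 (abs_nonneg a), le_abs_self a,
        mul_le_mul_of_nonneg_right (le_abs_self c) (sq_nonneg x)]
    nlinarith [le_of_mul_le_mul_right this (by positivity)]

theorem abs_le_one_of_eucNorm_eq_one {u : Fin N → ℝ} (hu : eucNorm u = 1) (n : Fin N) :
    |u n| ≤ 1 := by
  have hsum : u n ^ 2 ≤ u ⬝ᵥ u := by
    simpa only [dotProduct, ← sq] using
      Finset.single_le_sum (fun i _ => sq_nonneg (u i)) (Finset.mem_univ n)
  rw [← eucNorm_sq, hu, one_pow] at hsum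
  exact (sq_le_one_iff_abs_le_one _).1 hsum

theorem abs_dotProduct_le_of_eucNorm_eq_one {u : Fin N → ℝ} (hu : eucNorm u = 1) (w : Fin N → ℝ) :
    |w ⬝ᵥ u| ≤ ∑ n, |w n| :=
  (Finset.abs_sum_le_sum_abs _ _).trans <| Finset.sum_le_sum fun n _ => by
    rw [abs_mul]
    exact mul_le_of_le_one_right (abs_nonneg _) (abs_le_one_of_eucNorm_eq_one hu n)

theorem sum_mul_log_le_of_eucNorm_eq_one {u : Fin N → ℝ} (hu : eucNorm u = 1) {c : ℝ} (hc : 0 < c)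
    (hcu : ∀ n, c ≤ u n) (w : Fin N → ℝ) : ∑ n, w n * log (u n) ≤ ∑ n, |w n| * |log c| :=
  Finset.sum_le_sum fun n _ => by
    have hlog : log c ≤ log (u n) := log_le_log hc (hcu n)
    have hlog' : log (u n) ≤ 0 :=
      log_nonpos (hc.trans_le (hcu n)).le (abs_le.1 (abs_le_one_of_eucNorm_eq_one hu n)).2
    have habs : |log (u n)| ≤ |log c| := by
      rw [abs_of_nonpos hlog', abs_of_nonpos (hlog.trans hlog')]
      linarith
    calc w n * log (u n) ≤ |w n| * |log (u n)| := (le_abs_self _).trans (abs_mul _ _).le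
      _ ≤ |w n| * |log c| := mul_le_mul_of_nonneg_left habs (abs_nonneg _)

section Flow

variable {A : Matrix (Fin M) (Fin N) ℝ} {b : Fin M → ℝ} {L : ℕ}

theorem mul_gradR_of_eucNorm_eq_one (hL : L ≠ 0) {u : Fin N → ℝ} (hu : eucNorm u = 1)
    {w : Fin N → ℝ} (hw : Aᵀ *ᵥ (b - A *ᵥ w) = 0) (r : ℝ) :
    r * gradR A b L r u
      = (A *ᵥ hadPow (r • u) L - A *ᵥ w) ⬝ᵥ (A *ᵥ hadPow (r • u) L - A *ᵥ w)
        + (A *ᵥ hadPow (r • u) L - b) ⬝ᵥ A *ᵥ w := by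
  rw [gradR_of_eucNorm_eq_one hu, ← smul_eq_mul, ← smul_dotProduct, dotProduct_gradLoss_self hL,
    sub_dotProduct_mulVec_eq hw]

variable {ηr r : ℝ → ℝ} {u : ℝ → Fin N → ℝ} {t : ℝ}

theorem WNFlow.hasDerivAt_dotProduct (hflow : WNFlow A b L ηr (fun _ => 1) r u) (ht : 0 ≤ t)
    (hu : eucNorm (u t) = 1) (w : Fin N → ℝ) :
    HasDerivAt (fun s => w ⬝ᵥ u s)
      (r t * (gradR A b L (r t) (u t) * (w ⬝ᵥ u t) - w ⬝ᵥ gradLoss A b L (r t • u t))) t := by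
  refine (HasDerivAt.fun_sum fun n _ => (hflow.2 t ht n).const_mul (w n)).congr_deriv ?_
  simp only [gradU_of_eucNorm_eq_one hu, dotProduct, Finset.mul_sum, ← Finset.sum_sub_distrib]
  exact Finset.sum_congr rfl fun n _ => by ring

theorem WNFlow.hasDerivAt_sum_mul_log (hflow : WNFlow A b 2 ηr (fun _ => 1) r u) (ht : 0 ≤ t)
    (hu : eucNorm (u t) = 1) (hpos : ∀ n, 0 < u t n) (w : Fin N → ℝ) :
    HasDerivAt (fun s => ∑ n, w n * log (u s n))
      (r t * ((∑ n, w n) * gradR A b 2 (r t) (u t)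
        - r t * ((A *ᵥ hadPow (r t • u t) 2 - b) ⬝ᵥ A *ᵥ w))) t := by
  refine (HasDerivAt.fun_sum fun n _ =>
    ((hflow.2 t ht n).log (hpos n).ne').const_mul (w n)).congr_deriv ?_
  rw [← dotProduct_transpose_mulVec]
  simp only [gradU_of_eucNorm_eq_one hu, gradLoss, dotProduct, Finset.mul_sum, Finset.sum_mul,
    ← Finset.sum_sub_distrib]
  refine Finset.sum_congr rfl fun n _ => ?_
  field_simp [(hpos n).ne']
  simp only [Pi.smul_apply, smul_eq_mul]
  ring

end Flow

section Bounds

variable {A : Matrix (Fin M) (Fin N) ℝ} {b : Fin M → ℝ} {η : ℝ} {r : ℝ → ℝ} {u : ℝ → Fin N → ℝ}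

theorem WNFlow.exists_bound_of_one (hflow : WNFlow A b 1 (fun _ => η) (fun _ => 1) r u)
    (hη : 0 < η) (h0 : eucNorm (u 0) = 1) : ∃ B, ∀ t, 0 ≤ t → r t ≤ B := by
  obtain ⟨w, hw⟩ := exists_transpose_mulVec_sub_mulVec_eq_zero A b
  have hunit : ∀ t, 0 ≤ t → eucNorm (u t) = 1 := fun t ht => hflow.eucNorm_eq_one h0 ht
  set K := ∑ n, |w n|
  have hK : 0 ≤ K := Finset.sum_nonneg fun n _ => abs_nonneg (w n)
  have hφ : ∀ t, 0 ≤ t → |w ⬝ᵥ u t| ≤ K := fun t ht =>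
    abs_dotProduct_le_of_eucNorm_eq_one (hunit t ht) w
  set res : ℝ → Fin M → ℝ := fun t => A *ᵥ hadPow (r t • u t) 1 - A *ᵥ w
  have hV : ∀ t, 0 ≤ t → HasDerivAt (fun s => lyapunovOne η (r s) (w ⬝ᵥ u s))
      (-(r t * (res t ⬝ᵥ res t) * exp (r t ^ 2 / (2 * η)))) t := by
    intro t ht
    refine hasDerivAt_lyapunovOne hη.ne' (hflow.1 t ht) ?_
      (mul_gradR_of_eucNorm_eq_one one_ne_zero (hunit t ht) hw (r t))
    simpa only [gradLoss_one, dotProduct_transpose_mulVec] using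
      hflow.hasDerivAt_dotProduct ht (hunit t ht) w
  set θ := |r 0| + K + 2 * η + 1
  refine ⟨max θ (2 * η * ((θ + K) * exp (θ ^ 2 / (2 * η)))), fun t ht => ?_⟩
  rcases le_or_gt (r t) θ with hle | hgt
  · exact le_max_of_le_left hle
  obtain ⟨a, ⟨ha, hat⟩, hra, habove⟩ := exists_last_crossing ht
    (fun s hs => (hflow.1 s hs.1).continuousAt.continuousWithinAt)
    ((le_abs_self _).trans (by linarith)) hgt.le
  have hθ : K + 2 * η + 1 ≤ θ := by linarith [abs_nonneg (r 0)]
  have hdecr := monotoneOn_Icc_of_hasDerivAt_nonneg (fun s hs => (hV s (ha.trans hs.1)).neg)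
    fun s hs => by
      have hrs : 0 ≤ r s := (by linarith : (0 : ℝ) ≤ θ).trans (habove s hs)
      have hres := dotProduct_self_star_nonneg (res s)
      rw [neg_neg]
      positivity
  refine le_max_of_le_right (le_of_lyapunovOne_le hη hθ hgt.le (hφ t ht) (hφ a ha) ?_)
  rw [← hra]
  exact neg_le_neg_iff.1 (hdecr ⟨le_rfl, hat⟩ ⟨hat, le_rfl⟩ hat)

theorem WNFlow.exists_bound_of_two (hflow : WNFlow A b 2 (fun _ => η) (fun _ => 1) r u)
    (hη : 0 < η) (h0 : eucNorm (u 0) = 1) {c : ℝ} (hc : 0 < c)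
    (hlb : ∀ t, 0 ≤ t → ∀ n, c ≤ u t n) : ∃ B, ∀ t, 0 ≤ t → r t ≤ B := by
  obtain ⟨w, hw⟩ := exists_transpose_mulVec_sub_mulVec_eq_zero A b
  have hunit : ∀ t, 0 ≤ t → eucNorm (u t) = 1 := fun t ht => hflow.eucNorm_eq_one h0 ht
  have hpos : ∀ t, 0 ≤ t → ∀ n, 0 < u t n := fun t ht n => hc.trans_le (hlb t ht n)
  set K := ∑ n, |w n| * |log c|
  have hφ : ∀ t, 0 ≤ t → ∑ n, w n * log (u t n) ≤ K := fun t ht =>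
    sum_mul_log_le_of_eucNorm_eq_one (hunit t ht) hc (hlb t ht) w
  set W := ∑ n, w n
  set res : ℝ → Fin M → ℝ := fun t => A *ᵥ hadPow (r t • u t) 2 - A *ᵥ w
  have hV : ∀ t, 0 ≤ t → HasDerivAt (fun s => lyapunovTwo η W (r s) (∑ n, w n * log (u s n)))
      (r t ^ 2 * (res t ⬝ᵥ res t)) t := fun t ht =>
    hasDerivAt_lyapunovTwo hη.ne' (hflow.1 t ht)
      (hflow.hasDerivAt_sum_mul_log ht (hunit t ht) (hpos t ht) w)
      (mul_gradR_of_eucNorm_eq_one two_ne_zero (hunit t ht) hw (r t))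
  set V₀ := lyapunovTwo η W (r 0) (∑ n, w n * log (u 0 n))
  refine ⟨max 1 (|4 * η * (K - V₀)| + |2 * W|), fun t ht => le_max_of_pow_four_le ?_⟩
  have hincr : V₀ ≤ lyapunovTwo η W (r t) (∑ n, w n * log (u t n)) :=
    monotoneOn_Icc_of_hasDerivAt_nonneg (fun s hs => hV s hs.1)
      (fun s _ => mul_nonneg (sq_nonneg _) (dotProduct_self_star_nonneg _))
      ⟨le_rfl, ht⟩ ⟨ht, le_rfl⟩ ht
  have h4 : r t ^ 4 / (4 * η) ≤ K - V₀ + W / (2 * η) * r t ^ 2 := by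
    rw [lyapunovTwo] at hincr
    linarith [hφ t ht]
  calc r t ^ 4 = 4 * η * (r t ^ 4 / (4 * η)) := by field_simp
    _ ≤ 4 * η * (K - V₀ + W / (2 * η) * r t ^ 2) := by gcongr
    _ = 4 * η * (K - V₀) + 2 * W * r t ^ 2 := by field_simp; ring

end Bounds

theorem stmt15_general {M N : ℕ} (L : ℕ) (hL : L = 1 ∨ L = 2) (η : ℝ) (hη : 0 < η)
    (A : Matrix (Fin M) (Fin N) ℝ) (b : Fin M → ℝ)
    (r : ℝ → ℝ) (u : ℝ → Fin N → ℝ)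
    (hflow : WNFlow A b L (fun _ => η) (fun _ => 1) r u)
    (hnorm : eucNorm (u 0) = 1)
    (c : ℝ) (hc : 0 < c) (hlb : ∀ t, 0 ≤ t → ∀ n, c ≤ u t n) :
    ∃ B : ℝ, ∀ t, 0 ≤ t → r t ≤ B := by
  rcases hL with rfl | rfl
  · exact hflow.exists_bound_of_one hη hnorm
  · exact hflow.exists_bound_of_two hη hnorm hc hlb

theorem stmt15 {M N : ℕ} (L : ℕ) (hL : L = 1 ∨ L = 2) (η : ℝ) (hη : 0 < η)
    (A : Matrix (Fin M) (Fin N) ℝ) (b : Fin M → ℝ)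
    (r : ℝ → ℝ) (u : ℝ → Fin N → ℝ)
    (hflow : WNFlow A b L (fun _ => η) (fun _ => 1) r u)
    (hr0 : 0 < r 0) (hu0 : ∀ n, 0 < u 0 n) (hnorm : eucNorm (u 0) = 1)
    (c : ℝ) (hc : 0 < c) (hlb : ∀ t, 0 ≤ t → ∀ n, c ≤ u t n) :
    ∃ B : ℝ, ∀ t, 0 ≤ t → r t ≤ B :=
  stmt15_general L hL η hη A b r u hflow hnorm c hc hlb

end
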